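/- arXiv:2509.18000 — 5 statements merged into one kernel-verified Lean document; each statement's English description precedes it below -/
import Mathlib

section
/- Let g be a probability measure on ℝ symmetric around zero (g(-dω) = g(dω)), γ = β + σ²/2 with β, σ > 0, and define P(z) := ∫_ℝ 1/((γ + iω - z)(σ²/2 + z - iω)) g(dω) for z in the strip S := {z ∈ ℂ : Re(z) ∈ (-σ²/2, γ)}. Then P is holomorphic on S, satisfies P(conj(z)) = conj(P(z)), and is symmetric with respect to β/2: P(z + β/2) = P(-z + β/2) for all z with z + β/2 and -z + β/2 in S. -/
open MeasureTheory Complex ComplexConjugate Metric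

/-!
Write the integrand as `k(z, ω) = A⁻¹ B⁻¹` with `A = γ + iω - z`, `B = σ²/2 + z - iω`. On the strip
`Re A = γ - Re z` and `Re B = σ²/2 + Re z` are positive, so at distance `≥ ε` from the boundary
`‖k‖ ≤ ε⁻²` and `‖∂_z k‖ ≤ 2ε⁻³` uniformly in `ω`; since `g` is finite one may differentiate under
the integral sign. Both symmetries hold pointwise for the integrand up to the substitution
`ω ↦ -ω`, which leaves the integral unchanged because `g` is symmetric.
-/

noncomputable def stripKernel (a b : ℝ) (z : ℂ) (ω : ℝ) : ℂ :=
  1 / (((a : ℂ) + I * ω - z) * ((b : ℂ) + z - I * ω))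

noncomputable def stripKernelDeriv (a b : ℝ) (z : ℂ) (ω : ℝ) : ℂ :=
  ((a : ℂ) + I * ω - z)⁻¹ ^ 2 * ((b : ℂ) + z - I * ω)⁻¹ -
    ((a : ℂ) + I * ω - z)⁻¹ * ((b : ℂ) + z - I * ω)⁻¹ ^ 2

lemma Complex.norm_inv_le_inv_of_le_re {w : ℂ} {ε : ℝ} (hε : 0 < ε) (h : ε ≤ w.re) :
    ‖w⁻¹‖ ≤ ε⁻¹ := by
  rw [norm_inv]
  exact inv_anti₀ hε (h.trans (re_le_norm w))

section StripKernel

variable {a b : ℝ}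

lemma re_stripKernel_left (z : ℂ) (ω : ℝ) : ((a : ℂ) + I * ω - z).re = a - z.re := by
  simp

lemma re_stripKernel_right (z : ℂ) (ω : ℝ) : ((b : ℂ) + z - I * ω).re = b + z.re := by
  simp

lemma stripKernel_eq_inv_mul_inv (z : ℂ) (ω : ℝ) :
    stripKernel a b z ω = ((a : ℂ) + I * ω - z)⁻¹ * ((b : ℂ) + z - I * ω)⁻¹ := by
  rw [stripKernel, one_div, mul_inv]

lemma measurable_stripKernel (z : ℂ) : Measurable (stripKernel a b z) := by
  unfold stripKernel
  fun_prop

lemma measurable_stripKernelDeriv (z : ℂ) : Measurable (stripKernelDeriv a b z) := by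
  unfold stripKernelDeriv
  fun_prop

lemma hasDerivAt_stripKernel {z : ℂ} (ha : z.re < a) (hb : -b < z.re) (ω : ℝ) :
    HasDerivAt (stripKernel a b · ω) (stripKernelDeriv a b z ω) z := by
  have hA : (a : ℂ) + I * ω - z ≠ 0 := fun h => by
    have := re_stripKernel_left (a := a) z ω
    rw [h, zero_re] at this
    linarith
  have hB : (b : ℂ) + z - I * ω ≠ 0 := fun h => by
    have := re_stripKernel_right (b := b) z ω
    rw [h, zero_re] at this
    linarith
  have dA : HasDerivAt (fun z : ℂ => (a : ℂ) + I * ω - z) (-1) z := by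
    simpa using (hasDerivAt_id z).const_sub ((a : ℂ) + I * ω)
  have dB : HasDerivAt (fun z : ℂ => (b : ℂ) + z - I * ω) 1 z := by
    simpa using ((hasDerivAt_id z).const_add (b : ℂ)).sub_const (I * ω)
  rw [show (stripKernel a b · ω) = fun z => ((a : ℂ) + I * ω - z)⁻¹ * ((b : ℂ) + z - I * ω)⁻¹ from
    funext fun z => stripKernel_eq_inv_mul_inv z ω]
  refine ((dA.inv hA).mul (dB.inv hB)).congr_deriv ?_
  simp only [stripKernelDeriv, Pi.inv_apply]
  field_simp
  ring

section Margin

variable {ε : ℝ} (hε : 0 < ε) {z : ℂ} (ha : ε ≤ a - z.re) (hb : ε ≤ b + z.re)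
include hε ha hb

lemma norm_stripKernel_le (ω : ℝ) : ‖stripKernel a b z ω‖ ≤ ε⁻¹ ^ 2 := by
  have hA := norm_inv_le_inv_of_le_re hε (ha.trans_eq (re_stripKernel_left z ω).symm)
  have hB := norm_inv_le_inv_of_le_re hε (hb.trans_eq (re_stripKernel_right z ω).symm)
  rw [stripKernel_eq_inv_mul_inv, norm_mul, sq]
  exact mul_le_mul hA hB (norm_nonneg _) (by positivity)

lemma norm_stripKernelDeriv_le (ω : ℝ) : ‖stripKernelDeriv a b z ω‖ ≤ 2 * ε⁻¹ ^ 3 := by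
  have hA := norm_inv_le_inv_of_le_re hε (ha.trans_eq (re_stripKernel_left z ω).symm)
  have hB := norm_inv_le_inv_of_le_re hε (hb.trans_eq (re_stripKernel_right z ω).symm)
  calc ‖stripKernelDeriv a b z ω‖
      ≤ ‖((a : ℂ) + I * ω - z)⁻¹‖ ^ 2 * ‖((b : ℂ) + z - I * ω)⁻¹‖ +
          ‖((a : ℂ) + I * ω - z)⁻¹‖ * ‖((b : ℂ) + z - I * ω)⁻¹‖ ^ 2 := by
        rw [stripKernelDeriv]
        refine (norm_sub_le _ _).trans_eq ?_
        simp only [norm_mul, norm_pow]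
    _ ≤ ε⁻¹ ^ 2 * ε⁻¹ + ε⁻¹ * ε⁻¹ ^ 2 := by gcongr
    _ = 2 * ε⁻¹ ^ 3 := by ring

lemma integrable_stripKernel (μ : Measure ℝ) [IsFiniteMeasure μ] :
    Integrable (stripKernel a b z) μ :=
  .of_bound (measurable_stripKernel z).aestronglyMeasurable _
    (ae_of_all _ (norm_stripKernel_le hε ha hb))

end Margin

lemma conj_stripKernel (z : ℂ) (ω : ℝ) :
    conj (stripKernel a b z ω) = stripKernel a b (conj z) (-ω) := by
  simp only [stripKernel, map_div₀, map_one, map_mul, map_sub, map_add, conj_I, conj_ofReal,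
    ofReal_neg]
  ring_nf

lemma stripKernel_add_neg {c : ℝ} (hc : a - b = 2 * c) (z : ℂ) (ω : ℝ) :
    stripKernel a b (z + c) (-ω) = stripKernel a b (-z + c) ω := by
  have ha : (a : ℂ) = b + 2 * c := by exact_mod_cast (by linarith : a = b + 2 * c)
  simp only [stripKernel, ha, ofReal_neg]
  ring_nf

theorem differentiableOn_integral_stripKernel (μ : Measure ℝ) [IsFiniteMeasure μ] :
    DifferentiableOn ℂ (fun z => ∫ ω, stripKernel a b z ω ∂μ) {z | z.re ∈ Set.Ioo (-b) a} := by
  rintro z₀ ⟨hb₀, ha₀⟩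
  set ε := min (a - z₀.re) (b + z₀.re) / 2 with hε_def
  have hε : 0 < ε := half_pos (lt_min (by linarith) (by linarith))
  have margin : ∀ z ∈ ball z₀ ε, ε ≤ a - z.re ∧ ε ≤ b + z.re := by
    intro z hz
    have hre := (abs_re_le_norm (z - z₀)).trans_lt (mem_ball_iff_norm.mp hz)
    rw [sub_re, abs_lt] at hre
    have := min_le_left (a - z₀.re) (b + z₀.re)
    have := min_le_right (a - z₀.re) (b + z₀.re)
    constructor <;> linarith [hre.1, hre.2]
  obtain ⟨hε₀a, hε₀b⟩ := margin z₀ (mem_ball_self hε)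
  have hderiv := hasDerivAt_integral_of_dominated_loc_of_deriv_le (ball_mem_nhds z₀ hε)
    (.of_forall fun z => (measurable_stripKernel z).aestronglyMeasurable)
    (integrable_stripKernel hε hε₀a hε₀b μ) (measurable_stripKernelDeriv z₀).aestronglyMeasurable
    (ae_of_all _ fun ω z hz => norm_stripKernelDeriv_le hε (margin z hz).1 (margin z hz).2 ω)
    (integrable_const _)
    (ae_of_all _ fun ω z hz => hasDerivAt_stripKernel (by linarith [(margin z hz).1])
      (by linarith [(margin z hz).2]) ω)
  exact hderiv.2.differentiableAt.differentiableWithinAt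

variable (μ : Measure ℝ) [μ.IsNegInvariant]

theorem integral_stripKernel_conj (z : ℂ) :
    ∫ ω, stripKernel a b (conj z) ω ∂μ = conj (∫ ω, stripKernel a b z ω ∂μ) := by
  rw [← integral_conj]
  simp_rw [conj_stripKernel]
  exact (integral_neg_eq_self _ μ).symm

theorem integral_stripKernel_add_eq_neg_add {c : ℝ} (hc : a - b = 2 * c) (z : ℂ) :
    ∫ ω, stripKernel a b (z + c) ω ∂μ = ∫ ω, stripKernel a b (-z + c) ω ∂μ := by
  rw [← integral_neg_eq_self _ μ]
  simp_rw [stripKernel_add_neg hc]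

end StripKernel

theorem stmt2_general (β σ : ℝ) (γ : ℝ) (hγ : γ = β + σ ^ 2 / 2)
    (g : Measure ℝ) [IsProbabilityMeasure g]
    (hsym : Measure.map (fun ω => -ω) g = g)
    (P : ℂ → ℂ)
    (hP : ∀ z, P z =
      ∫ ω, 1 / (((γ : ℂ) + Complex.I * ω - z) * ((σ : ℂ) ^ 2 / 2 + z - Complex.I * ω)) ∂g)
    (S : Set ℂ) (hS : S = {z : ℂ | z.re ∈ Set.Ioo (-(σ ^ 2 / 2)) γ}) :
    DifferentiableOn ℂ P S ∧
    (∀ z ∈ S, P (starRingEnd ℂ z) = starRingEnd ℂ (P z)) ∧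
    (∀ z : ℂ, z + β / 2 ∈ S → -z + β / 2 ∈ S → P (z + β / 2) = P (-z + β / 2)) := by
  have : g.IsNegInvariant := ⟨hsym⟩
  have hP' : P = fun z => ∫ ω, stripKernel γ (σ ^ 2 / 2) z ω ∂g := by
    funext z
    simp [hP, stripKernel]
  have hc : γ - σ ^ 2 / 2 = 2 * (β / 2) := by rw [hγ]; ring
  subst hP' hS
  refine ⟨differentiableOn_integral_stripKernel g, fun z _ => integral_stripKernel_conj g z,
    fun z _ _ => ?_⟩
  exact_mod_cast integral_stripKernel_add_eq_neg_add g hc z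

/-- Symmetry and holomorphy properties of `P` on the strip
`S = { z : Re z ∈ (-σ²/2, γ) }`, for a symmetric probability measure `g`. -/
theorem stmt2 (β σ : ℝ) (hβ : 0 < β) (hσ : 0 < σ) (γ : ℝ) (hγ : γ = β + σ ^ 2 / 2)
    (g : Measure ℝ) [IsProbabilityMeasure g]
    (hsym : Measure.map (fun ω => -ω) g = g)
    (P : ℂ → ℂ)
    (hP : ∀ z, P z =
      ∫ ω, 1 / (((γ : ℂ) + Complex.I * ω - z) * ((σ : ℂ) ^ 2 / 2 + z - Complex.I * ω)) ∂g)
    (S : Set ℂ) (hS : S = {z : ℂ | z.re ∈ Set.Ioo (-(σ ^ 2 / 2)) γ}) :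
    DifferentiableOn ℂ P S ∧
    (∀ z ∈ S, P (starRingEnd ℂ z) = starRingEnd ℂ (P z)) ∧
    (∀ z : ℂ, z + β / 2 ∈ S → -z + β / 2 ∈ S → P (z + β / 2) = P (-z + β / 2)) :=
  stmt2_general β σ γ hγ g hsym P hP S hS
end

section
/- Let g be a probability measure on ℝ with finite second moment, γ = β + σ²/2 with β, σ > 0, and P(z) := ∫_ℝ g(dω)/((γ + iω - z)(σ²/2 + z - iω)). Then there exists a constant C(β,σ) such that for all z ∈ ℂ with Re(z) ∈ [0, β], |P(z)| ≤ (1 + ∫_ℝ ω² g(dω)) · C(β,σ)/Im(z)². -/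
open MeasureTheory Complex

/-!
Write the integrand as `1 / (a * b)` with `a = γ + iω - z` and `b = σ²/2 + z - iω`. On the strip
both real parts are at least `c = σ²/2`, and `Im a = -Im b = ω - Im z`, so `‖a * b‖` dominates both
`c²` and `(ω - Im z)²`. Since `(Im z)² ≤ 2 (ω - Im z)² + 2 ω²`, this gives the pointwise bound
`‖1 / (a * b)‖ ≤ (1 + ω²) C / (Im z)²`, which integrates against `g` to the claim.
-/

lemma sq_le_norm_mul_of_le_re {a b : ℂ} {c : ℝ} (hc : 0 ≤ c) (ha : c ≤ a.re) (hb : c ≤ b.re) :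
    c ^ 2 ≤ ‖a * b‖ := by
  rw [norm_mul, sq]
  exact mul_le_mul (ha.trans (re_le_norm a)) (hb.trans (re_le_norm b)) hc (norm_nonneg a)

lemma abs_im_mul_im_le_norm_mul (a b : ℂ) : |a.im * b.im| ≤ ‖a * b‖ := by
  rw [norm_mul, abs_mul]
  exact mul_le_mul (abs_im_le_norm a) (abs_im_le_norm b) (abs_nonneg _) (norm_nonneg a)

lemma sq_le_of_sq_le_of_sq_sub_le {ω y c N : ℝ} (hc : 0 < c) (hcN : c ^ 2 ≤ N)
    (hN : (ω - y) ^ 2 ≤ N) : y ^ 2 ≤ (1 + ω ^ 2) * (2 + 2 / c ^ 2) * N := by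
  have hc2 : 0 < c ^ 2 := by positivity
  have hω : ω ^ 2 ≤ ω ^ 2 * N / c ^ 2 := by
    rw [le_div_iff₀ hc2]
    exact mul_le_mul_of_nonneg_left hcN (sq_nonneg ω)
  have hN0 : 0 ≤ N / c ^ 2 := div_nonneg (hc2.le.trans hcN) hc2.le
  calc y ^ 2 ≤ 2 * (ω - y) ^ 2 + 2 * ω ^ 2 := by nlinarith [sq_nonneg (2 * ω - y)]
    _ ≤ 2 * N + 2 * (ω ^ 2 * N / c ^ 2) := by gcongr
    _ ≤ (1 + ω ^ 2) * (2 + 2 / c ^ 2) * N := by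
      have : (1 + ω ^ 2) * (2 + 2 / c ^ 2) * N
          = 2 * N + 2 * (ω ^ 2 * N / c ^ 2) + 2 * ω ^ 2 * N + 2 * (N / c ^ 2) := by
        field_simp; ring
      rw [this]
      nlinarith [mul_nonneg (sq_nonneg ω) (hc2.le.trans hcN)]

lemma norm_one_div_mul_le {a b : ℂ} {c ω y : ℝ} (hc : 0 < c) (ha : c ≤ a.re) (hb : c ≤ b.re)
    (ha_im : a.im = ω - y) (hb_im : b.im = y - ω) (hy : y ≠ 0) :
    ‖1 / (a * b)‖ ≤ (1 + ω ^ 2) * ((2 + 2 / c ^ 2) / y ^ 2) := by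
  have hcN := sq_le_norm_mul_of_le_re hc.le ha hb
  have hN : (ω - y) ^ 2 ≤ ‖a * b‖ := by
    simpa [ha_im, hb_im, abs_mul, ← sq, abs_sub_comm y ω] using abs_im_mul_im_le_norm_mul a b
  rw [norm_div, norm_one, ← mul_div_assoc, div_le_div_iff₀ ((pow_pos hc 2).trans_le hcN) (by positivity),
    one_mul]
  exact sq_le_of_sq_le_of_sq_sub_le hc hcN hN

lemma norm_integral_le_of_norm_le_one_add_sq {E : Type*} [NormedAddCommGroup E] [NormedSpace ℝ E]
    {g : Measure ℝ} [IsProbabilityMeasure g] (hg : Integrable (fun ω : ℝ => ω ^ 2) g)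
    {f : ℝ → E} {K : ℝ} (hf : ∀ ω, ‖f ω‖ ≤ (1 + ω ^ 2) * K) :
    ‖∫ ω, f ω ∂g‖ ≤ (1 + ∫ ω, ω ^ 2 ∂g) * K := by
  have hint : Integrable (fun ω : ℝ => 1 + ω ^ 2) g := (integrable_const 1).add hg
  calc ‖∫ ω, f ω ∂g‖ ≤ ∫ ω, (1 + ω ^ 2) * K ∂g :=
        norm_integral_le_of_norm_le (hint.mul_const K) (Filter.Eventually.of_forall hf)
    _ = (1 + ∫ ω, ω ^ 2 ∂g) * K := by
        rw [integral_mul_const, integral_add (integrable_const 1) hg, integral_const,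
          probReal_univ, one_smul]

theorem stmt3_general (β σ : ℝ) (hσ : 0 < σ) (γ : ℝ) (hγ : γ = β + σ ^ 2 / 2) :
    ∃ C : ℝ, 0 < C ∧
      ∀ (g : Measure ℝ), IsProbabilityMeasure g →
        Integrable (fun ω : ℝ => ω ^ 2) g →
        ∀ z : ℂ, z.re ∈ Set.Icc 0 β → z.im ≠ 0 →
          ‖∫ ω, 1 / (((γ : ℂ) + Complex.I * ω - z) * ((σ : ℂ) ^ 2 / 2 + z - Complex.I * ω)) ∂g‖
            ≤ (1 + ∫ ω, ω ^ 2 ∂g) * C / z.im ^ 2 := by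
  refine ⟨2 + 2 / (σ ^ 2 / 2) ^ 2, by positivity, fun g _ hg z hz hy => ?_⟩
  rw [mul_div_assoc]
  refine norm_integral_le_of_norm_le_one_add_sq hg fun ω => ?_
  refine norm_one_div_mul_le (by positivity) ?_ ?_ ?_ ?_ hy
  · have : σ ^ 2 / 2 ≤ γ - z.re := by linarith [hz.2]
    simpa using this
  · have : σ ^ 2 / 2 ≤ σ ^ 2 / 2 + z.re := by linarith [hz.1]
    simpa [← ofReal_pow] using this
  · simp
  · simp [← ofReal_pow]

/-- Decay estimate for `P(z)` in the imaginary direction, on the strip `Re z ∈ [0, β]`,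
with constant depending only on `β, σ`. -/
theorem stmt3 (β σ : ℝ) (hβ : 0 < β) (hσ : 0 < σ) (γ : ℝ) (hγ : γ = β + σ ^ 2 / 2) :
    ∃ C : ℝ, 0 < C ∧
      ∀ (g : Measure ℝ), IsProbabilityMeasure g →
        Integrable (fun ω : ℝ => ω ^ 2) g →
        ∀ z : ℂ, z.re ∈ Set.Icc 0 β → z.im ≠ 0 →
          ‖∫ ω, 1 / (((γ : ℂ) + Complex.I * ω - z) * ((σ : ℂ) ^ 2 / 2 + z - Complex.I * ω)) ∂g‖
            ≤ (1 + ∫ ω, ω ^ 2 ∂g) * C / z.im ^ 2 :=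
  stmt3_general β σ hσ γ hγ
end

section
/- Let γ, σ, ω₀ > 0, β = γ - σ²/2 > 0, and Q(z, ω) := (z + σ²/2 - iω)(γ + iω - z). For real x with x > β, the Wronskian-type determinant D̃(x) := Q(x, -ω₀)·∂_z Q(x, ω₀) - ∂_z Q(x, -ω₀)·Q(x, ω₀) equals 2iω₀(2x² - 2xβ + γ² + σ⁴/4 + 2ω₀²) and is nonzero. -/
open Complex

lemma hasDerivAt_add_mul_sub (a b z : ℂ) :
    HasDerivAt (fun w : ℂ => (w + a) * (b - w)) ((b - z) - (z + a)) z := by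
  have h : HasDerivAt (fun w : ℂ => (w + a) * (b - w)) (1 * (b - z) + (z + a) * -1) z :=
    ((hasDerivAt_id' z).add_const a).mul ((hasDerivAt_id' z).const_sub b)
  convert h using 1
  ring

lemma wronskian_factor_pos (x γ σ ω : ℝ) (hω : ω ≠ 0) :
    0 < 2 * x ^ 2 - 2 * x * (γ - σ ^ 2 / 2) + γ ^ 2 + σ ^ 4 / 4 + 2 * ω ^ 2 := by
  have hsq : 2 * x ^ 2 - 2 * x * (γ - σ ^ 2 / 2) + γ ^ 2 + σ ^ 4 / 4 + 2 * ω ^ 2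
      = 2 * (x - (γ - σ ^ 2 / 2) / 2) ^ 2 + (γ + σ ^ 2 / 2) ^ 2 / 2 + 2 * ω ^ 2 := by
    ring
  rw [hsq]
  positivity

theorem stmt10_general (γ σ ω₀ : ℝ) (hω : 0 < ω₀)
    (β : ℝ) (hβ : β = γ - σ ^ 2 / 2)
    (Q : ℂ → ℝ → ℂ)
    (hQ : ∀ z ω, Q z ω = (z + σ ^ 2 / 2 - Complex.I * ω) * ((γ : ℂ) + Complex.I * ω - z))
    (x : ℝ) :
    Q x (-ω₀) * deriv (fun z : ℂ => Q z ω₀) x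
        - deriv (fun z : ℂ => Q z (-ω₀)) x * Q x ω₀
      = 2 * Complex.I * ω₀ *
          (2 * (x : ℂ) ^ 2 - 2 * x * β + γ ^ 2 + σ ^ 4 / 4 + 2 * ω₀ ^ 2) ∧
    Q x (-ω₀) * deriv (fun z : ℂ => Q z ω₀) x
        - deriv (fun z : ℂ => Q z (-ω₀)) x * Q x ω₀ ≠ 0 := by
  subst hβ
  have hderiv (ω : ℝ) : deriv (fun z : ℂ => Q z ω) x
      = ((γ : ℂ) + I * ω - x) - ((x : ℂ) + σ ^ 2 / 2 - I * ω) := by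
    have hQω : (fun z : ℂ => Q z ω) = fun z => (z + (σ ^ 2 / 2 - I * ω)) * ((γ + I * ω) - z) :=
      funext fun z => by rw [hQ]; ring
    rw [hQω, (hasDerivAt_add_mul_sub _ _ _).deriv]
    ring
  have hformula : Q x (-ω₀) * deriv (fun z : ℂ => Q z ω₀) x
        - deriv (fun z : ℂ => Q z (-ω₀)) x * Q x ω₀
      = 2 * I * ω₀ *
          (2 * (x : ℂ) ^ 2 - 2 * x * (γ - σ ^ 2 / 2 : ℝ) + γ ^ 2 + σ ^ 4 / 4 + 2 * ω₀ ^ 2) := by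
    rw [hderiv, hderiv, hQ, hQ]
    push_cast
    linear_combination (-4 * I * (ω₀ : ℂ) ^ 3) * I_sq
  refine ⟨hformula, hformula ▸ mul_ne_zero (by simp [hω.ne']) ?_⟩
  exact_mod_cast (wronskian_factor_pos x γ σ ω₀ hω.ne').ne'

/-- The Wronskian-type determinant
`D̃(x) = Q(x,-ω₀) ∂_z Q(x,ω₀) - ∂_z Q(x,-ω₀) Q(x,ω₀)` for real `x > β`:
explicit formula and non-vanishing. -/
theorem stmt10 (γ σ ω₀ : ℝ) (hγ : 0 < γ) (hσ : 0 < σ) (hω : 0 < ω₀)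
    (β : ℝ) (hβ : β = γ - σ ^ 2 / 2) (hβpos : 0 < β)
    (Q : ℂ → ℝ → ℂ)
    (hQ : ∀ z ω, Q z ω = (z + σ ^ 2 / 2 - Complex.I * ω) * ((γ : ℂ) + Complex.I * ω - z))
    (x : ℝ) (hx : β < x) :
    Q x (-ω₀) * deriv (fun z : ℂ => Q z ω₀) x
        - deriv (fun z : ℂ => Q z (-ω₀)) x * Q x ω₀
      = 2 * Complex.I * ω₀ *
          (2 * (x : ℂ) ^ 2 - 2 * x * β + γ ^ 2 + σ ^ 4 / 4 + 2 * ω₀ ^ 2) ∧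
    Q x (-ω₀) * deriv (fun z : ℂ => Q z ω₀) x
        - deriv (fun z : ℂ => Q z (-ω₀)) x * Q x ω₀ ≠ 0 :=
  stmt10_general γ σ ω₀ hω β hβ Q hQ x
end

section
/- Let λ > 0 and let a(t) := c·ĝ(it)·(e^{γt}·1_{t<0} + e^{-(σ²/2)t}·1_{t≥0}) where c = κ/(σ² + 2γ), γ = β + σ²/2 with β, σ > 0, κ ≥ 0, and ĝ(it) = ∫_ℝ cos(ωt) g(dω) for a symmetric probability measure g on ℝ. Then a ∈ L¹(ℝ), and the bilateral Laplace transform ∫_ℝ e^{-zt} a(t) dt, for Re(z) ∈ (-σ²/2, γ), equals (κ/2)·P(z) where P(z) = ∫_ℝ g(dω)/((γ + iω - z)(σ²/2 + z - iω)). -/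
/-! By the symmetry of `g`, `ĝ(it) = ∫ e^{iωt} g(dω)`. After Fubini, the `t`-integral for fixed
`ω` is the bilateral Laplace transform of the two-sided exponential
`e^{γt}1_{t<0} + e^{-(σ²/2)t}1_{t≥0}` at `z - iω`, namely
`1/(γ + iω - z) + 1/(σ²/2 + z - iω)`. These partial fractions sum to
`(γ + σ²/2) / ((γ + iω - z)(σ²/2 + z - iω))`, and `c (γ + σ²/2) = κ/2`.
Integrability of `a` follows from `|ĝ| ≤ 1`. -/

open MeasureTheory Set Complex

noncomputable def twoSidedExp (α β t : ℝ) : ℝ :=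
  if t < 0 then Real.exp (α * t) else Real.exp (-β * t)

namespace twoSidedExp

variable {α β : ℝ}

@[fun_prop]
lemma measurable : Measurable (twoSidedExp α β) :=
  Measurable.ite measurableSet_Iio (by fun_prop) (by fun_prop)

lemma nonneg (t : ℝ) : 0 ≤ twoSidedExp α β t := by
  unfold twoSidedExp; split_ifs <;> positivity

lemma exp_mul (x t : ℝ) :
    Real.exp (x * t) * twoSidedExp α β t = twoSidedExp (α + x) (β - x) t := by
  unfold twoSidedExp
  split_ifs <;> rw [← Real.exp_add] <;> ring_nf

lemma integrable (hα : 0 < α) (hβ : 0 < β) : Integrable (twoSidedExp α β) := by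
  have hneg : IntegrableOn (twoSidedExp α β) (Iio 0) :=
    ((integrableOn_exp_mul_Iic hα 0).mono_set Iio_subset_Iic_self).congr_fun
      (fun t ht => (if_pos ht).symm) measurableSet_Iio
  have hpos : IntegrableOn (twoSidedExp α β) (Ici 0) :=
    ((integrableOn_Ici_iff_integrableOn_Ioi).2
      (integrableOn_exp_mul_Ioi (neg_lt_zero.2 hβ) 0)).congr_fun
      (fun t ht => (if_neg (not_lt.2 ht)).symm) measurableSet_Ici
  rw [← integrableOn_univ, ← Iio_union_Ici]
  exact hneg.union hpos

lemma norm_cexp_mul (w : ℂ) (t : ℝ) :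
    ‖cexp (w * t) * twoSidedExp α β t‖ = twoSidedExp (α + w.re) (β - w.re) t := by
  rw [norm_mul, norm_exp, norm_real, Real.norm_of_nonneg (nonneg t), ← exp_mul]
  simp

lemma integrable_cexp_mul {w : ℂ} (h₁ : -α < w.re) (h₂ : w.re < β) :
    Integrable (fun t : ℝ => cexp (w * t) * twoSidedExp α β t) :=
  (integrable (α := α + w.re) (β := β - w.re) (by linarith) (by linarith)).mono'
    (by fun_prop) (ae_of_all _ fun t => (norm_cexp_mul w t).le)

lemma integral_cexp_mul {w : ℂ} (h₁ : -α < w.re) (h₂ : w.re < β) :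
    ∫ t : ℝ, cexp (w * t) * twoSidedExp α β t = 1 / (α + w) + 1 / (β - w) := by
  have hint := integrable_cexp_mul h₁ h₂
  rw [← intervalIntegral.integral_Iio_add_Ici hint.integrableOn hint.integrableOn]
  have hneg : ∫ t in Iio (0 : ℝ), cexp (w * t) * twoSidedExp α β t = 1 / (α + w) := by
    rw [setIntegral_congr_fun measurableSet_Iio (g := fun t : ℝ => cexp ((α + w) * t))
      fun t ht => by simp [twoSidedExp, mem_Iio.1 ht, ← Complex.exp_add]; ring_nf,
      ← integral_Iic_eq_integral_Iio, integral_exp_mul_complex_Iic (by simp; linarith)]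
    simp
  have hpos : ∫ t in Ici (0 : ℝ), cexp (w * t) * twoSidedExp α β t = 1 / (β - w) := by
    rw [setIntegral_congr_fun measurableSet_Ici (g := fun t : ℝ => cexp ((w - β) * t))
      fun t ht => by simp [twoSidedExp, not_lt.2 (mem_Ici.1 ht), ← Complex.exp_add]; ring_nf,
      integral_Ici_eq_integral_Ioi, integral_exp_mul_complex_Ioi (by simp; linarith)]
    simp only [ofReal_zero, mul_zero, Complex.exp_zero]
    rw [neg_div, ← div_neg, neg_sub, one_div]
  rw [hneg, hpos]

end twoSidedExp

lemma integral_cexp_eq_integral_cos_of_map_neg {g : Measure ℝ} [IsFiniteMeasure g]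
    (hsym : g.map (fun ω => -ω) = g) (t : ℝ) :
    ∫ ω, cexp (ω * t * I) ∂g = ((∫ ω, Real.cos (ω * t) ∂g : ℝ) : ℂ) := by
  have hint : ∀ s : ℝ, Integrable (fun ω : ℝ => cexp (ω * s * I)) g := fun s =>
    .of_bound (by fun_prop) 1 (ae_of_all _ fun ω => by
      rw [← ofReal_mul, norm_exp_ofReal_mul_I])
  have hflip : ∫ ω, cexp (ω * ((-t : ℝ) : ℂ) * I) ∂g = ∫ ω, cexp (ω * t * I) ∂g := by
    conv_rhs => rw [← hsym]
    rw [show (fun ω : ℝ => -ω) = MeasurableEquiv.neg ℝ from rfl, integral_map_equiv]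
    simp [neg_mul, mul_neg]
  rw [← integral_complex_ofReal]
  calc ∫ ω, cexp (ω * t * I) ∂g
      = (∫ ω, cexp (ω * t * I) ∂g + ∫ ω, cexp (ω * ((-t : ℝ) : ℂ) * I) ∂g) / 2 := by
        rw [hflip]; ring
    _ = ∫ ω, ((Real.cos (ω * t) : ℝ) : ℂ) ∂g := by
      rw [← integral_add (hint t) (hint (-t)), ← integral_div]
      congr 1; funext ω
      push_cast
      rw [Complex.cos, mul_neg, neg_mul]

lemma integral_cexp_mul_integral_cos_mul_twoSidedExp {g : Measure ℝ} [IsFiniteMeasure g]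
    (hsym : g.map (fun ω => -ω) = g) {α β : ℝ} {z : ℂ} (h₁ : -β < z.re) (h₂ : z.re < α) :
    ∫ t : ℝ, cexp (-z * t) * (((∫ ω, Real.cos (ω * t) ∂g) * twoSidedExp α β t : ℝ) : ℂ)
      = ∫ ω, (1 / (α + I * ω - z) + 1 / (β + z - I * ω)) ∂g := by
  set K : ℝ → ℝ → ℂ := fun t ω => cexp ((I * ω - z) * t) * twoSidedExp α β t
  have hK : Integrable (Function.uncurry K) (volume.prod g) := by
    refine ((twoSidedExp.integrable (α := α - z.re) (β := β + z.re) (by linarith)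
      (by linarith)).comp_fst g).mono' (by fun_prop) (ae_of_all _ fun p => ?_)
    rw [Function.uncurry_apply_pair, twoSidedExp.norm_cexp_mul]
    simp [sub_eq_add_neg]
  calc _ = ∫ t : ℝ, ∫ ω, K t ω ∂g := by
        congr 1; funext t
        rw [ofReal_mul, ← integral_cexp_eq_integral_cos_of_map_neg hsym, ← integral_mul_const,
          ← integral_const_mul]
        congr 1; funext ω
        rw [← mul_assoc, ← Complex.exp_add]
        congr 2
        ring
    _ = ∫ ω, (∫ t : ℝ, K t ω) ∂g := integral_integral_swap hK
    _ = _ := integral_congr_ae <| ae_of_all _ fun ω => by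
        show ∫ t : ℝ, cexp ((I * ω - z) * t) * twoSidedExp α β t = _
        rw [twoSidedExp.integral_cexp_mul (by simpa using h₂) (by simp; linarith)]
        ring

lemma integrable_integral_cos_mul_twoSidedExp {g : Measure ℝ} [IsFiniteMeasure g] {α β : ℝ}
    (hα : 0 < α) (hβ : 0 < β) :
    Integrable (fun t => (∫ ω, Real.cos (ω * t) ∂g) * twoSidedExp α β t) :=
  (twoSidedExp.integrable hα hβ).bdd_mul
    ((Measurable.stronglyMeasurable (f := fun p : ℝ × ℝ => Real.cos (p.2 * p.1))
      (by fun_prop)).integral_prod_right').aestronglyMeasurable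
    (ae_of_all _ fun _ => norm_integral_le_of_norm_le_const
      (ae_of_all _ fun _ => (Real.norm_eq_abs _).trans_le (Real.abs_cos_le_one _)))

theorem stmt13_general (β σ κ : ℝ) (hβ : 0 < β) (hσ : 0 < σ)
    (γ : ℝ) (hγ : γ = β + σ ^ 2 / 2)
    (g : Measure ℝ) [IsProbabilityMeasure g]
    (hsym : Measure.map (fun ω => -ω) g = g)
    (a : ℝ → ℝ)
    (ha : ∀ t, a t = κ / (σ ^ 2 + 2 * γ) * (∫ ω, Real.cos (ω * t) ∂g) *
      (if t < 0 then Real.exp (γ * t) else Real.exp (-(σ ^ 2 / 2) * t))) :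
    Integrable a ∧
    ∀ z : ℂ, z.re ∈ Set.Ioo (-(σ ^ 2 / 2)) γ →
      (∫ t : ℝ, Complex.exp (-z * t) * a t)
        = κ / 2 *
          ∫ ω, 1 / (((γ : ℂ) + Complex.I * ω - z) * ((σ : ℂ) ^ 2 / 2 + z - Complex.I * ω)) ∂g := by
  have hs : 0 < σ ^ 2 / 2 := by positivity
  have hγ₀ : 0 < γ := by rw [hγ]; positivity
  set c := κ / (σ ^ 2 + 2 * γ) with hc
  obtain rfl : a = fun t => c * ((∫ ω, Real.cos (ω * t) ∂g) * twoSidedExp γ (σ ^ 2 / 2) t) := by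
    funext t; rw [ha, mul_assoc]; rfl
  refine ⟨(integrable_integral_cos_mul_twoSidedExp hγ₀ hs).const_mul c, fun z ⟨hz₁, hz₂⟩ => ?_⟩
  have hA : ∀ ω : ℝ, (γ : ℂ) + I * ω - z ≠ 0 := fun ω h => by
    have := congrArg re h; simp at this; linarith
  have hB : ∀ ω : ℝ, (σ : ℂ) ^ 2 / 2 + z - I * ω ≠ 0 := fun ω h => by
    have := congrArg re h; simp [← ofReal_pow] at this; linarith
  calc ∫ t : ℝ, cexp (-z * t) * (c * ((∫ ω, Real.cos (ω * t) ∂g) * twoSidedExp γ (σ ^ 2 / 2) t) : ℝ)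
      = c * ∫ ω, (1 / (γ + I * ω - z) + 1 / ((σ : ℂ) ^ 2 / 2 + z - I * ω)) ∂g := by
        simp_rw [ofReal_mul (c : ℝ), mul_left_comm _ (c : ℂ)]
        rw [integral_const_mul,
          integral_cexp_mul_integral_cos_mul_twoSidedExp hsym (by linarith) hz₂]
        push_cast
        rfl
    _ = c * ∫ ω, (γ + (σ : ℂ) ^ 2 / 2) *
          (1 / ((γ + I * ω - z) * ((σ : ℂ) ^ 2 / 2 + z - I * ω))) ∂g := by
        congr 2; funext ω
        rw [one_div_add_one_div (hA ω) (hB ω)]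
        ring
    _ = _ := by
        have hden : (σ : ℂ) ^ 2 + 2 * γ ≠ 0 := by exact_mod_cast (by positivity : σ ^ 2 + 2 * γ ≠ 0)
        rw [integral_const_mul, ← mul_assoc, hc]
        congr 1
        push_cast
        field_simp
        ring

/-- The kernel `a` is integrable and its bilateral Laplace transform equals `(κ/2) P(z)`
on the strip `Re z ∈ (-σ²/2, γ)`. -/
theorem stmt13 (β σ κ : ℝ) (hβ : 0 < β) (hσ : 0 < σ) (hκ : 0 ≤ κ)
    (γ : ℝ) (hγ : γ = β + σ ^ 2 / 2)
    (g : Measure ℝ) [IsProbabilityMeasure g]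
    (hsym : Measure.map (fun ω => -ω) g = g)
    (a : ℝ → ℝ)
    (ha : ∀ t, a t = κ / (σ ^ 2 + 2 * γ) * (∫ ω, Real.cos (ω * t) ∂g) *
      (if t < 0 then Real.exp (γ * t) else Real.exp (-(σ ^ 2 / 2) * t))) :
    Integrable a ∧
    ∀ z : ℂ, z.re ∈ Set.Ioo (-(σ ^ 2 / 2)) γ →
      (∫ t : ℝ, Complex.exp (-z * t) * a t)
        = κ / 2 *
          ∫ ω, 1 / (((γ : ℂ) + Complex.I * ω - z) * ((σ : ℂ) ^ 2 / 2 + z - Complex.I * ω)) ∂g :=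
  stmt13_general β σ κ hβ hσ γ hγ g hsym a ha
end

section
/- Let κ ≥ 0, β, σ > 0, and let g be a probability measure on ℝ. Let m be the uniform probability measure on the torus 𝕋. Then for the Kuramoto mean field game with interaction cost c(x, μ) := ∫ 2sin²((x-y)/2) μ(dy, dω) and cost functional J^{ω,μ}(α) = E∫₀^∞ e^{-βt}(α_t²/2 + κc(X_t^{ω,α}, μ_t))dt with dX^{ω,α}_t = (α_t + ω)dt + σdB_t on 𝕋, the product measure m ⊗ g is a stationary solution: the constant flow μ_t = m ⊗ g admits, for every ω, the optimal control α ≡ 0 with L(X_t^{ω,0}) = m for all t when X₀^ω ~ m. -/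
open MeasureTheory

instance : Fact (0 < 2 * Real.pi) := ⟨by positivity⟩

/-
The interaction cost against `m ⊗ g` only sees the first marginal `m`, and `∫ cos(x - y) m(dy)`
vanishes because shifting `y` by half a period flips the sign of the integrand. Hence
`c(·, m ⊗ g) ≡ 1`, so the running cost of any control is `α²/2 + κ ≥ κ`, the cost of `α ≡ 0`.
Invariance of `m` under independent increments is right invariance of Haar measure.
-/

namespace MeasureTheory.Measure

@[to_additive]
theorem mconv_eq_self_of_isMulRightInvariant {G : Type*} [Group G] [MeasurableSpace G]
    [MeasurableMul₂ G] (μ ν : Measure G) [SFinite μ] [IsProbabilityMeasure ν]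
    [μ.IsMulRightInvariant] : μ ∗ₘ ν = μ := by
  have hfst : (fun q : G × G => q.1 * q.2) = Prod.fst ∘ fun q : G × G => (q.1 * q.2, q.2) := rfl
  rw [mconv, hfst, ← map_map measurable_fst (by fun_prop),
    (measurePreserving_mul_prod μ ν).map_eq, map_fst_prod, measure_univ, one_smul]

end MeasureTheory.Measure

namespace AddCircle

theorem ofReal_inv_smul_volume {T : ℝ} [hT : Fact (0 < T)] :
    ENNReal.ofReal T⁻¹ • (volume : Measure (AddCircle T)) = haarAddCircle := by
  rw [volume_eq_smul_haarAddCircle, smul_smul, ENNReal.ofReal_inv_of_pos hT.out,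
    ENNReal.inv_mul_cancel (ENNReal.ofReal_pos.mpr hT.out).ne' ENNReal.ofReal_ne_top, one_smul]

theorem continuous_cos_lift : Continuous (Real.cos_periodic.lift : AddCircle (2 * Real.pi) → ℝ) :=
  Real.continuous_cos.quotient_liftOn' _

theorem integral_cos_lift_sub (x : AddCircle (2 * Real.pi)) :
    ∫ y, Real.cos_periodic.lift (x - y) ∂haarAddCircle = 0 := by
  refine integral_eq_zero_of_add_right_eq_neg (g := (Real.pi : AddCircle (2 * Real.pi))) ?_
  intro y
  induction x using QuotientAddGroup.induction_on with | H a => ?_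
  induction y using QuotientAddGroup.induction_on with | H b => ?_
  rw [← QuotientAddGroup.mk_add, ← QuotientAddGroup.mk_sub, ← QuotientAddGroup.mk_sub]
  simp only [Function.Periodic.lift_coe, sub_add_eq_sub_sub, Real.cos_sub_pi]

theorem integral_one_sub_cos_lift_sub_fst_prod (x : AddCircle (2 * Real.pi)) {X : Type*}
    [MeasurableSpace X] (ν : Measure X) [IsProbabilityMeasure ν] :
    ∫ p, (1 - Real.cos_periodic.lift (x - p.1)) ∂(haarAddCircle.prod ν) = 1 := by
  have hint : Integrable (fun y => Real.cos_periodic.lift (x - y))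
      (haarAddCircle : Measure (AddCircle (2 * Real.pi))) :=
    (continuous_cos_lift.comp (continuous_const.sub continuous_id)).integrable_of_hasCompactSupport
      (HasCompactSupport.of_compactSpace _)
  rw [integral_fun_fst (fun y => 1 - Real.cos_periodic.lift (x - y)), probReal_univ, one_smul,
    integral_sub (integrable_const 1) hint, integral_cos_lift_sub, integral_const, probReal_univ]
  simp

end AddCircle

theorem discounted_integral_const_le {Ω : Type*} [MeasurableSpace Ω] (μ : Measure Ω)
    [IsProbabilityMeasure μ] {β : ℝ} (hβ : 0 < β) (κ : ℝ) (α : ℝ → Ω → ℝ)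
    (hα : ∀ t, Integrable (fun ω => α t ω ^ 2 / 2) μ)
    (hJ : IntegrableOn (fun t => Real.exp (-β * t) * ∫ ω, (α t ω ^ 2 / 2 + κ) ∂μ) (Set.Ioi 0)) :
    ∫ t in Set.Ioi (0 : ℝ), Real.exp (-β * t) * κ ≤
      ∫ t in Set.Ioi (0 : ℝ), Real.exp (-β * t) * ∫ ω, (α t ω ^ 2 / 2 + κ) ∂μ := by
  refine setIntegral_mono_on ((exp_neg_integrableOn_Ioi 0 hβ).mul_const κ) hJ measurableSet_Ioi
    fun t _ => mul_le_mul_of_nonneg_left ?_ (Real.exp_nonneg _)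
  have hkinetic : 0 ≤ ∫ ω, α t ω ^ 2 / 2 ∂μ := integral_nonneg fun ω => by positivity
  rw [integral_add (hα t) (integrable_const κ), integral_const, probReal_univ, one_smul]
  linarith

theorem stmt18_general (κ β : ℝ) (hβ : 0 < β)
    (g : Measure ℝ) [IsProbabilityMeasure g]
    (m : Measure (AddCircle (2 * Real.pi)))
    (hm : m = ENNReal.ofReal (2 * Real.pi)⁻¹ • volume)
    (c : AddCircle (2 * Real.pi) → Measure (AddCircle (2 * Real.pi) × ℝ) → ℝ)
    (hc : ∀ x μ', c x μ' = ∫ p, (1 - Real.cos_periodic.lift (x - p.1)) ∂μ') :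
    (∀ x, c x (m.prod g) = 1) ∧
    (∀ ν : Measure (AddCircle (2 * Real.pi)), IsProbabilityMeasure ν →
      Measure.map (fun q : AddCircle (2 * Real.pi) × AddCircle (2 * Real.pi) => q.1 + q.2)
        (m.prod ν) = m) ∧
    (∀ (Ω' : Type) (_ : MeasurableSpace Ω') (μΩ : Measure Ω'), IsProbabilityMeasure μΩ →
      ∀ (α : ℝ → Ω' → ℝ) (X : ℝ → Ω' → AddCircle (2 * Real.pi)),
        (∀ t, Integrable (fun ω' => (α t ω') ^ 2 / 2) μΩ) →
        (∀ t, Integrable (fun ω' => c (X t ω') (m.prod g)) μΩ) →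
        IntegrableOn (fun t => Real.exp (-β * t) *
          ∫ ω', ((α t ω') ^ 2 / 2 + κ * c (X t ω') (m.prod g)) ∂μΩ) (Set.Ioi 0) →
        (∫ t in Set.Ioi (0 : ℝ), Real.exp (-β * t) *
            ∫ ω', ((α t ω') ^ 2 / 2 + κ * c (X t ω') (m.prod g)) ∂μΩ)
          ≥ ∫ t in Set.Ioi (0 : ℝ), Real.exp (-β * t) * κ) := by
  rw [AddCircle.ofReal_inv_smul_volume] at hm
  subst hm
  have hcost : ∀ x, c x (AddCircle.haarAddCircle.prod g) = 1 := fun x => by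
    rw [hc, AddCircle.integral_one_sub_cos_lift_sub_fst_prod]
  refine ⟨hcost, fun ν _ => Measure.conv_eq_self_of_isAddRightInvariant _ ν, ?_⟩
  intro Ω' _ μΩ _ α X hα _ hJ
  simp only [hcost, mul_one] at hJ ⊢
  exact discounted_integral_const_le μΩ hβ κ α hα hJ

/-- The `g`-uniform measure `m ⊗ g` is a stationary solution of the Kuramoto MFG:
the interaction cost `c(x, m ⊗ g)` is constantly `1` (here
`2 sin²((x-y)/2) = 1 - cos(x-y)` on the torus `𝕋 = ℝ/2πℤ`), hence any admissible
control incurs at least the cost of the control `α ≡ 0`, and the uniform law is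
preserved by the uncontrolled dynamics `X_t = X₀ + ωt + σB_t` (addition of any
independent increment leaves the uniform measure on the torus invariant). -/
theorem stmt18 (κ β σ : ℝ) (hκ : 0 ≤ κ) (hβ : 0 < β) (hσ : 0 < σ)
    (g : Measure ℝ) [IsProbabilityMeasure g]
    (m : Measure (AddCircle (2 * Real.pi)))
    (hm : m = ENNReal.ofReal (2 * Real.pi)⁻¹ • volume)
    (c : AddCircle (2 * Real.pi) → Measure (AddCircle (2 * Real.pi) × ℝ) → ℝ)
    (hc : ∀ x μ', c x μ' = ∫ p, (1 - Real.cos_periodic.lift (x - p.1)) ∂μ') :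
    (∀ x, c x (m.prod g) = 1) ∧
    (∀ ν : Measure (AddCircle (2 * Real.pi)), IsProbabilityMeasure ν →
      Measure.map (fun q : AddCircle (2 * Real.pi) × AddCircle (2 * Real.pi) => q.1 + q.2)
        (m.prod ν) = m) ∧
    (∀ (Ω' : Type) (_ : MeasurableSpace Ω') (μΩ : Measure Ω'), IsProbabilityMeasure μΩ →
      ∀ (α : ℝ → Ω' → ℝ) (X : ℝ → Ω' → AddCircle (2 * Real.pi)),
        (∀ t, Integrable (fun ω' => (α t ω') ^ 2 / 2) μΩ) →
        (∀ t, Integrable (fun ω' => c (X t ω') (m.prod g)) μΩ) →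
        IntegrableOn (fun t => Real.exp (-β * t) *
          ∫ ω', ((α t ω') ^ 2 / 2 + κ * c (X t ω') (m.prod g)) ∂μΩ) (Set.Ioi 0) →
        (∫ t in Set.Ioi (0 : ℝ), Real.exp (-β * t) *
            ∫ ω', ((α t ω') ^ 2 / 2 + κ * c (X t ω') (m.prod g)) ∂μΩ)
          ≥ ∫ t in Set.Ioi (0 : ℝ), Real.exp (-β * t) * κ) :=
  stmt18_general κ β hβ g m hm c hc
end
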